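/- The function g satisfies g(r) → 0 as r → 1⁻. -/

import Mathlib

open Real Set Filter

/-- Complete elliptic integral of the first kind. -/
noncomputable def K (r : ℝ) : ℝ :=
  ∫ θ in (0:ℝ)..(π/2), 1 / Real.sqrt (1 - r^2 * Real.sin θ ^ 2)

/-- Complete elliptic integral of the second kind. -/
noncomputable def E (r : ℝ) : ℝ :=
  ∫ θ in (0:ℝ)..(π/2), Real.sqrt (1 - r^2 * Real.sin θ ^ 2)

/-- Complementary complete elliptic integral of the first kind: `K'(r) = K(√(1-r²))`. -/
noncomputable def K' (r : ℝ) : ℝ := K (Real.sqrt (1 - r^2))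

/-- Complementary complete elliptic integral of the second kind: `E'(r) = E(√(1-r²))`. -/
noncomputable def E' (r : ℝ) : ℝ := E (Real.sqrt (1 - r^2))

/-- The special function `m(r) = (2/π) r'² K(r) K'(r)` (here `r'² = 1 - r²`). -/
noncomputable def m (r : ℝ) : ℝ := (2/π) * (1 - r^2) * K r * K' r

/-- The function `g` from Lemma 2.2. -/
noncomputable def g (r : ℝ) : ℝ :=
  K r * K' r * (E r * E' r + r^2 * K r * K' r - K r * E' r) / (4 * E' r * K r - π)^2

/-!
As `r → 1⁻`, `K(r) → ∞` while `K'(r) → π/2`, `E(r) → 1` and `E'(r) → π/2`. Each limit comes from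
squeezing the integrand between elementary functions; the blow-up of `K` comes from
`√(1 - r² sin² θ) ≤ cos θ + r' ≤ π/2 - θ + r'`, which gives `K(r) ≥ log (1 + π / (2 r'))`.
Dividing numerator and denominator of `g` by `K²` gives
`g = (K' E E' / K + K' (r² K' - E')) / (4 E' - π / K)²`, whose numerator tends to
`0 + (π/2) (π/2 - π/2) = 0` and whose denominator tends to `(2π)²`.
-/

open Topology

section Bounds

lemma one_sub_sq_mul_sin_sq_pos {s : ℝ} (hs : s ^ 2 < 1) (θ : ℝ) :
    0 < 1 - s ^ 2 * sin θ ^ 2 := by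
  nlinarith [sin_sq_le_one θ, sq_nonneg s, sq_nonneg (sin θ)]

lemma continuous_K_integrand {s : ℝ} (hs : s ^ 2 < 1) :
    Continuous fun θ : ℝ => 1 / √(1 - s ^ 2 * sin θ ^ 2) :=
  continuous_const.div (by fun_prop) fun θ =>
    (sqrt_pos.mpr (one_sub_sq_mul_sin_sq_pos hs θ)).ne'

lemma continuous_E_integrand (s : ℝ) : Continuous fun θ : ℝ => √(1 - s ^ 2 * sin θ ^ 2) := by
  fun_prop

lemma pi_div_two_le_K {s : ℝ} (hs : s ^ 2 < 1) : π / 2 ≤ K s :=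
  calc π / 2 = ∫ _ in (0:ℝ)..(π / 2), (1:ℝ) := by simp
    _ ≤ K s := intervalIntegral.integral_mono_on (by positivity) intervalIntegrable_const
      ((continuous_K_integrand hs).intervalIntegrable _ _) fun θ _ =>
        one_le_one_div (sqrt_pos.mpr (one_sub_sq_mul_sin_sq_pos hs θ))
          (sqrt_le_one.mpr (by nlinarith [sq_nonneg s, sq_nonneg (sin θ)]))

lemma K_le {s : ℝ} (hs : s ^ 2 < 1) : K s ≤ π / 2 / √(1 - s ^ 2) :=
  calc K s ≤ ∫ _ in (0:ℝ)..(π / 2), 1 / √(1 - s ^ 2) :=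
        intervalIntegral.integral_mono_on (by positivity)
          ((continuous_K_integrand hs).intervalIntegrable _ _) intervalIntegrable_const
          fun θ _ => one_div_le_one_div_of_le (sqrt_pos.mpr (by linarith))
            (sqrt_le_sqrt (by nlinarith [sq_nonneg s, sin_sq_le_one θ]))
    _ = π / 2 / √(1 - s ^ 2) := by simp [div_eq_mul_inv]

lemma E_le_pi_div_two (s : ℝ) : E s ≤ π / 2 :=
  calc E s ≤ ∫ _ in (0:ℝ)..(π / 2), (1:ℝ) :=
        intervalIntegral.integral_mono_on (by positivity)
          ((continuous_E_integrand s).intervalIntegrable _ _) intervalIntegrable_const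
          fun θ _ => sqrt_le_one.mpr (by nlinarith [sq_nonneg s, sq_nonneg (sin θ)])
    _ = π / 2 := by simp

lemma sqrt_one_sub_sq_mul_pi_div_two_le_E (s : ℝ) : √(1 - s ^ 2) * (π / 2) ≤ E s :=
  calc √(1 - s ^ 2) * (π / 2) = ∫ _ in (0:ℝ)..(π / 2), √(1 - s ^ 2) := by simp [mul_comm]
    _ ≤ E s := intervalIntegral.integral_mono_on (by positivity) intervalIntegrable_const
      ((continuous_E_integrand s).intervalIntegrable _ _) fun θ _ =>
        sqrt_le_sqrt (by nlinarith [sq_nonneg s, sin_sq_le_one θ])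

lemma cos_le_sqrt_one_sub_sq_mul_sin_sq {r θ : ℝ} (hr : r ^ 2 ≤ 1)
    (hθ : θ ∈ Icc 0 (π / 2)) : cos θ ≤ √(1 - r ^ 2 * sin θ ^ 2) := by
  rw [← sqrt_sq (cos_nonneg_of_mem_Icc ⟨by linarith [hθ.1, pi_pos], hθ.2⟩)]
  exact sqrt_le_sqrt (by nlinarith [sin_sq_add_cos_sq θ, sq_nonneg (sin θ)])

lemma sqrt_one_sub_sq_mul_sin_sq_le {r θ : ℝ} (hr : r ^ 2 ≤ 1) (hθ : θ ∈ Icc 0 (π / 2)) :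
    √(1 - r ^ 2 * sin θ ^ 2) ≤ cos θ + √(1 - r ^ 2) := by
  have hc : 0 ≤ cos θ := cos_nonneg_of_mem_Icc ⟨by linarith [hθ.1, pi_pos], hθ.2⟩
  have hs : √(1 - r ^ 2) ^ 2 = 1 - r ^ 2 := sq_sqrt (by linarith)
  rw [← sqrt_sq (by positivity : 0 ≤ cos θ + √(1 - r ^ 2))]
  refine sqrt_le_sqrt ?_
  nlinarith [sin_sq_add_cos_sq θ, mul_nonneg hc (sqrt_nonneg (1 - r ^ 2)),
    mul_nonneg (by linarith : (0:ℝ) ≤ 1 - r ^ 2)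
      (by nlinarith [sin_sq_le_one θ] : (0:ℝ) ≤ 1 - sin θ ^ 2)]

lemma one_le_E {r : ℝ} (hr : r ^ 2 ≤ 1) : 1 ≤ E r :=
  calc 1 = ∫ θ in (0:ℝ)..(π / 2), cos θ := by simp
    _ ≤ E r := intervalIntegral.integral_mono_on (by positivity)
      (continuous_cos.intervalIntegrable _ _) ((continuous_E_integrand r).intervalIntegrable _ _)
      fun _ hθ => cos_le_sqrt_one_sub_sq_mul_sin_sq hr hθ

lemma E_le_one_add {r : ℝ} (hr : r ^ 2 ≤ 1) : E r ≤ 1 + √(1 - r ^ 2) * (π / 2) :=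
  calc E r ≤ ∫ θ in (0:ℝ)..(π / 2), (cos θ + √(1 - r ^ 2)) :=
        intervalIntegral.integral_mono_on (by positivity)
          ((continuous_E_integrand r).intervalIntegrable _ _)
          ((continuous_cos.add continuous_const).intervalIntegrable _ _)
          fun _ hθ => sqrt_one_sub_sq_mul_sin_sq_le hr hθ
    _ = 1 + √(1 - r ^ 2) * (π / 2) := by
        rw [intervalIntegral.integral_add (continuous_cos.intervalIntegrable _ _)
          intervalIntegrable_const]
        simp [mul_comm]

lemma log_one_add_le_K {r : ℝ} (hr : r ^ 2 < 1) : log (1 + π / 2 / √(1 - r ^ 2)) ≤ K r := by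
  set e := √(1 - r ^ 2)
  have he : 0 < e := sqrt_pos.mpr (by linarith)
  calc log (1 + π / 2 / e) = ∫ θ in (0:ℝ)..(π / 2), (e + π / 2 - θ)⁻¹ := by
        rw [intervalIntegral.integral_comp_sub_left (fun x => x⁻¹), add_sub_cancel_right,
          sub_zero, integral_inv_of_pos he (by positivity), add_div, div_self he.ne', add_comm]
    _ ≤ K r := by
        refine intervalIntegral.integral_mono_on (by positivity) ?_
          ((continuous_K_integrand hr).intervalIntegrable _ _) fun θ hθ => ?_
        · refine (ContinuousOn.inv₀ (by fun_prop) fun x hx => ?_).intervalIntegrable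
          rw [uIcc_of_le (by positivity)] at hx
          linarith [hx.2]
        · have hcos : cos θ ≤ π / 2 - θ := by
            rw [← sin_pi_div_two_sub]
            exact sin_le (by linarith [hθ.2])
          rw [one_div]
          exact inv_anti₀ (sqrt_pos.mpr (one_sub_sq_mul_sin_sq_pos hr θ))
            (by linarith [sqrt_one_sub_sq_mul_sin_sq_le hr.le hθ])

lemma sqrt_one_sub_sq_sqrt_one_sub_sq {r : ℝ} (h0 : 0 ≤ r) (h1 : r ≤ 1) :
    √(1 - √(1 - r ^ 2) ^ 2) = r := by
  rw [sq_sqrt (by nlinarith), sub_sub_cancel, sqrt_sq h0]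

lemma pi_div_two_le_K' {r : ℝ} (h0 : 0 < r) (h1 : r ≤ 1) : π / 2 ≤ K' r :=
  pi_div_two_le_K (by rw [sq_sqrt (by nlinarith)]; nlinarith)

lemma K'_le {r : ℝ} (h0 : 0 < r) (h1 : r ≤ 1) : K' r ≤ π / 2 / r := by
  have h := K_le (s := √(1 - r ^ 2)) (by rw [sq_sqrt (by nlinarith)]; nlinarith)
  rwa [sqrt_one_sub_sq_sqrt_one_sub_sq h0.le h1] at h

lemma mul_pi_div_two_le_E' {r : ℝ} (h0 : 0 ≤ r) (h1 : r ≤ 1) : r * (π / 2) ≤ E' r := by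
  have h := sqrt_one_sub_sq_mul_pi_div_two_le_E (√(1 - r ^ 2))
  rwa [sqrt_one_sub_sq_sqrt_one_sub_sq h0 h1] at h

end Bounds

section Limits

lemma tendsto_sqrt_one_sub_sq_nhdsLT_one :
    Tendsto (fun r : ℝ => √(1 - r ^ 2)) (𝓝[<] 1) (𝓝[>] 0) := by
  refine tendsto_nhdsWithin_iff.mpr ⟨?_, ?_⟩
  · exact ((by fun_prop : Continuous fun r : ℝ => √(1 - r ^ 2)).tendsto' 1 0
      (by simp)).mono_left nhdsWithin_le_nhds
  · filter_upwards [Ioo_mem_nhdsLT (show (-1 : ℝ) < 1 by norm_num)] with r hr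
    exact sqrt_pos.mpr (by nlinarith [hr.1, hr.2])

lemma tendsto_K_nhdsLT_one : Tendsto K (𝓝[<] 1) atTop := by
  have hlog : Tendsto (fun x : ℝ => log (1 + π / 2 / x)) (𝓝[>] 0) atTop := by
    refine tendsto_log_atTop.comp (tendsto_atTop_add_const_left _ 1 ?_)
    exact (tendsto_inv_nhdsGT_zero.const_mul_atTop (by positivity : (0:ℝ) < π / 2)).congr
      fun x => (div_eq_mul_inv _ _).symm
  refine tendsto_atTop_mono' _ ?_ (hlog.comp tendsto_sqrt_one_sub_sq_nhdsLT_one)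
  filter_upwards [Ioo_mem_nhdsLT (show (-1 : ℝ) < 1 by norm_num)] with r hr
  exact log_one_add_le_K (by nlinarith [hr.1, hr.2])

lemma tendsto_K'_nhdsLT_one : Tendsto K' (𝓝[<] 1) (𝓝 (π / 2)) := by
  have hup : Tendsto (fun r : ℝ => π / 2 / r) (𝓝[<] 1) (𝓝 (π / 2)) := by
    have h : Tendsto (fun r : ℝ => π / 2 / r) (𝓝 1) (𝓝 (π / 2 / 1)) :=
      tendsto_const_nhds.div tendsto_id one_ne_zero
    simpa using h.mono_left nhdsWithin_le_nhds
  refine tendsto_of_tendsto_of_tendsto_of_le_of_le' tendsto_const_nhds hup ?_ ?_ <;>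
    filter_upwards [Ioo_mem_nhdsLT (show (0 : ℝ) < 1 by norm_num)] with r hr
  · exact pi_div_two_le_K' hr.1 hr.2.le
  · exact K'_le hr.1 hr.2.le

lemma tendsto_E'_nhdsLT_one : Tendsto E' (𝓝[<] 1) (𝓝 (π / 2)) := by
  have hlow : Tendsto (fun r : ℝ => r * (π / 2)) (𝓝[<] 1) (𝓝 (π / 2)) := by
    exact tendsto_nhdsWithin_of_tendsto_nhds
      ((continuous_mul_const (π / 2)).tendsto' 1 _ (one_mul _))
  refine tendsto_of_tendsto_of_tendsto_of_le_of_le' hlow tendsto_const_nhds ?_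
    (Eventually.of_forall fun r => E_le_pi_div_two _)
  filter_upwards [Ioo_mem_nhdsLT (show (0 : ℝ) < 1 by norm_num)] with r hr
  exact mul_pi_div_two_le_E' hr.1.le hr.2.le

lemma tendsto_E_nhdsLT_one : Tendsto E (𝓝[<] 1) (𝓝 1) := by
  have hup : Tendsto (fun r : ℝ => 1 + √(1 - r ^ 2) * (π / 2)) (𝓝[<] 1) (𝓝 1) := by
    simpa using tendsto_const_nhds.add
      ((tendsto_sqrt_one_sub_sq_nhdsLT_one.mono_right nhdsWithin_le_nhds).mul_const (π / 2))
  refine tendsto_of_tendsto_of_tendsto_of_le_of_le' tendsto_const_nhds hup ?_ ?_ <;>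
    filter_upwards [Ioo_mem_nhdsLT (show (-1 : ℝ) < 1 by norm_num)] with r hr
  · exact one_le_E (by nlinarith [hr.1, hr.2])
  · exact E_le_one_add (by nlinarith [hr.1, hr.2])

end Limits

lemma g_eq_of_K_ne_zero {r : ℝ} (hK : K r ≠ 0) :
    g r = (K' r * E r * E' r / K r + K' r * (r ^ 2 * K' r - E' r)) /
      (4 * E' r - π / K r) ^ 2 := by
  have hnum : K r * K' r * (E r * E' r + r ^ 2 * K r * K' r - K r * E' r) =
      K r ^ 2 * (K' r * E r * E' r / K r + K' r * (r ^ 2 * K' r - E' r)) := by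
    field_simp
    ring
  have hden : (4 * E' r * K r - π) ^ 2 = K r ^ 2 * (4 * E' r - π / K r) ^ 2 := by
    field_simp
  rw [g, hnum, hden, mul_div_mul_left _ _ (pow_ne_zero 2 hK)]

theorem stmt_14 : Filter.Tendsto g (nhdsWithin 1 (Set.Iio (1:ℝ))) (nhds 0) := by
  have hK := tendsto_K_nhdsLT_one
  have hr : Tendsto (fun r : ℝ => r ^ 2) (𝓝[<] 1) (𝓝 1) := by
    exact tendsto_nhdsWithin_of_tendsto_nhds ((continuous_pow 2).tendsto' 1 1 (one_pow 2))
  have hnum : Tendsto (fun r => K' r * E r * E' r / K r + K' r * (r ^ 2 * K' r - E' r))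
      (𝓝[<] 1) (𝓝 0) := by
    simpa using (((tendsto_K'_nhdsLT_one.mul tendsto_E_nhdsLT_one).mul
      tendsto_E'_nhdsLT_one).div_atTop hK).add
      (tendsto_K'_nhdsLT_one.mul ((hr.mul tendsto_K'_nhdsLT_one).sub tendsto_E'_nhdsLT_one))
  have hden : Tendsto (fun r => (4 * E' r - π / K r) ^ 2) (𝓝[<] 1) (𝓝 ((2 * π) ^ 2)) := by
    convert ((tendsto_E'_nhdsLT_one.const_mul 4).sub (tendsto_const_nhds.div_atTop hK)).pow 2
      using 2
    ring
  refine (zero_div ((2 * π) ^ 2) ▸ hnum.div hden (by positivity)).congr' ?_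
  filter_upwards [hK.eventually_gt_atTop 0] with r hKr
  exact (g_eq_of_K_ne_zero hKr.ne').symm
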